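/- arXiv:1810.11485 — 2 statements merged into one kernel-verified Lean document; each statement's English description precedes it below -/
import Mathlib

section
/- Let (S,𝔖,μ) and (T,𝔗,ν) be measure spaces over σ-rings. Then 𝔖^σ ⊗ 𝔗^σ = σ({A × B : μ(A) < ∞, ν(B) < ∞}), where 𝔖^σ, 𝔗^σ are the σ-rings of σ-finite sets of μ and ν, and 𝔖^σ ⊗ 𝔗^σ denotes the product σ-ring. -/
/-!
A set of finite measure is σ-finite, and a rectangle `(⋃ m, Aₘ) ×ˢ (⋃ n, Bₙ)` of σ-finite sets
is the countable union of the finite-measure rectangles `Aₘ ×ˢ Bₙ`. Hence each of the two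
generating families lies in the σ-ring generated by the other.
-/

open Set ENNReal

/-- A family of sets is a σ-ring if it contains `∅` and is closed under
set differences and countable unions. -/
def IsSigmaRing {α : Type*} (C : Set (Set α)) : Prop :=
  ∅ ∈ C ∧ (∀ A B : Set α, A ∈ C → B ∈ C → A \ B ∈ C) ∧
    ∀ f : ℕ → Set α, (∀ n, f n ∈ C) → (⋃ n, f n) ∈ C

/-- The σ-ring generated by a family of sets. -/
def genSR {α : Type*} (D : Set (Set α)) : Set (Set α) :=
  ⋂₀ {C | IsSigmaRing C ∧ D ⊆ C}

/-- A measure on a σ-ring: countably additive, vanishing on `∅`. -/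
def IsMeasure {α : Type*} (C : Set (Set α)) (μ : Set α → ℝ≥0∞) : Prop :=
  μ ∅ = 0 ∧ ∀ f : ℕ → Set α, (∀ n, f n ∈ C) →
    Pairwise (Function.onFun Disjoint f) → μ (⋃ n, f n) = ∑' n, μ (f n)

/-- The family of μ-σ-finite sets: countable unions of sets of finite measure. -/
def sigmaFin {α : Type*} (C : Set (Set α)) (μ : Set α → ℝ≥0∞) : Set (Set α) :=
  {A | ∃ g : ℕ → Set α, (∀ n, g n ∈ C ∧ μ (g n) < ⊤) ∧ A = ⋃ n, g n}

/-- Restriction of a family of sets to a set `S`. -/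
def restrictFam {α : Type*} (D : Set (Set α)) (S : Set α) : Set (Set α) :=
  (fun A => A ∩ S) '' D

/-- The product σ-ring, generated by measurable rectangles. -/
def prodSR {α β : Type*} (S : Set (Set α)) (T : Set (Set β)) : Set (Set (α × β)) :=
  genSR {R | ∃ A ∈ S, ∃ B ∈ T, R = A ×ˢ B}

/-- The σ-algebra generated by a family of sets. -/
def genSA {α : Type*} (D : Set (Set α)) : MeasurableSpace α :=
  MeasurableSpace.generateFrom D

/-- The (extended) Lebesgue integral of a nonnegative function with respect to a
measure on a σ-ring, as the supremum of integrals of simple functions below it. -/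
noncomputable def lintSR {α : Type*} (C : Set (Set α)) (μ : Set α → ℝ≥0∞)
    (f : α → ℝ≥0∞) : ℝ≥0∞ :=
  ⨆ (n : ℕ) (c : Fin n → ℝ≥0∞) (A : Fin n → Set α) (_ : ∀ i, A i ∈ C)
    (_ : ∀ x, (∑ i, (A i).indicator (fun _ => c i) x) ≤ f x),
    ∑ i, c i * μ (A i)

/-- The positive part of an extended real, as an `ℝ≥0∞`. -/
noncomputable def epos (x : EReal) : ℝ≥0∞ := (x ⊔ 0).abs

/-- Measurability of an extended-real function with respect to a σ-ring:
measurable for the generated σ-algebra, with support in the σ-ring. -/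
def SRMeasurableE {α : Type*} (C : Set (Set α)) (f : α → EReal) : Prop :=
  @Measurable α EReal (genSA C) _ f ∧ {x | f x ≠ 0} ∈ C

/-- The Lebesgue integral of an extended-real function w.r.t. a measure on a σ-ring. -/
noncomputable def integralE {α : Type*} (C : Set (Set α)) (μ : Set α → ℝ≥0∞)
    (f : α → EReal) : EReal :=
  ((lintSR C μ fun x => epos (f x) : ℝ≥0∞) : EReal) -
    ((lintSR C μ fun x => epos (-f x) : ℝ≥0∞) : EReal)

/-- Integrability of an extended-real function w.r.t. a measure on a σ-ring. -/
def IntegrableE {α : Type*} (C : Set (Set α)) (μ : Set α → ℝ≥0∞)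
    (f : α → EReal) : Prop :=
  SRMeasurableE C f ∧ lintSR C μ (fun x => (f x).abs) < ⊤

/-- `lam` is the product of the measures `μ` and `ν` on σ-rings `S`, `T`:
the unique measure on the product σ-ring whose σ-finite component is the Halmos
product of the σ-finite components. -/
def IsProdMeasure {α β : Type*} (S : Set (Set α)) (T : Set (Set β))
    (μ : Set α → ℝ≥0∞) (ν : Set β → ℝ≥0∞) (lam : Set (α × β) → ℝ≥0∞) : Prop :=
  IsMeasure (prodSR S T) lam ∧
  (∀ A ∈ S, ∀ B ∈ T, μ A < ⊤ → ν B < ⊤ → lam (A ×ˢ B) = μ A * ν B) ∧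
  sigmaFin (prodSR S T) lam =
    genSR {R | ∃ A ∈ S, ∃ B ∈ T, μ A < ⊤ ∧ ν B < ⊤ ∧ R = A ×ˢ B}

section SigmaRing

variable {α : Type*}

lemma isSigmaRing_genSR (D : Set (Set α)) : IsSigmaRing (genSR D) :=
  ⟨fun _ hC => hC.1.1,
    fun A B hA hB C hC => hC.1.2.1 A B (hA C hC) (hB C hC),
    fun f hf C hC => hC.1.2.2 f fun n => hf n C hC⟩

lemma subset_genSR (D : Set (Set α)) : D ⊆ genSR D :=
  fun _ hA _ hC => hC.2 hA

lemma genSR_subset {D C : Set (Set α)} (hC : IsSigmaRing C) (hDC : D ⊆ C) :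
    genSR D ⊆ C :=
  fun _ hA => hA C ⟨hC, hDC⟩

lemma genSR_eq_of_subset_of_subset_genSR {D E : Set (Set α)} (hDE : D ⊆ E)
    (hED : E ⊆ genSR D) : genSR E = genSR D :=
  (genSR_subset (isSigmaRing_genSR D) hED).antisymm
    (genSR_subset (isSigmaRing_genSR E) (hDE.trans (subset_genSR E)))

lemma IsSigmaRing.iUnion_mem {C : Set (Set α)} (hC : IsSigmaRing C) {ι : Type*}
    [Countable ι] {f : ι → Set α} (hf : ∀ i, f i ∈ C) : (⋃ i, f i) ∈ C := by
  cases isEmpty_or_nonempty ι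
  · simpa only [iUnion_of_empty] using hC.1
  · obtain ⟨g, hg⟩ := exists_surjective_nat ι
    rw [← hg.iUnion_comp]
    exact hC.2.2 _ fun n => hf (g n)

lemma mem_sigmaFin_of_lt_top {C : Set (Set α)} {μ : Set α → ℝ≥0∞} {A : Set α}
    (hA : A ∈ C) (hμA : μ A < ⊤) : A ∈ sigmaFin C μ :=
  ⟨fun _ => A, fun _ => ⟨hA, hμA⟩, (iUnion_const A).symm⟩

end SigmaRing

lemma prod_mem_genSR_of_mem_sigmaFin {α β : Type*} {S : Set (Set α)} {T : Set (Set β)}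
    {μ : Set α → ℝ≥0∞} {ν : Set β → ℝ≥0∞} {A : Set α} {B : Set β}
    (hA : A ∈ sigmaFin S μ) (hB : B ∈ sigmaFin T ν) :
    A ×ˢ B ∈ genSR {R | ∃ A ∈ S, ∃ B ∈ T, μ A < ⊤ ∧ ν B < ⊤ ∧ R = A ×ˢ B} := by
  obtain ⟨g, hg, rfl⟩ := hA
  obtain ⟨h, hh, rfl⟩ := hB
  rw [← iUnion_prod]
  exact (isSigmaRing_genSR _).iUnion_mem fun p =>
    subset_genSR _ ⟨g p.1, (hg p.1).1, h p.2, (hh p.2).1, (hg p.1).2, (hh p.2).2, rfl⟩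

theorem stmt_6_general {α β : Type*} (S : Set (Set α)) (T : Set (Set β))
    (μ : Set α → ℝ≥0∞) (ν : Set β → ℝ≥0∞) :
    prodSR (sigmaFin S μ) (sigmaFin T ν) =
      genSR {R | ∃ A ∈ S, ∃ B ∈ T, μ A < ⊤ ∧ ν B < ⊤ ∧ R = A ×ˢ B} := by
  refine genSR_eq_of_subset_of_subset_genSR ?_ ?_
  · rintro R ⟨A, hA, B, hB, hμA, hνB, rfl⟩
    exact ⟨A, mem_sigmaFin_of_lt_top hA hμA, B, mem_sigmaFin_of_lt_top hB hνB, rfl⟩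
  · rintro R ⟨A, hA, B, hB, rfl⟩
    exact prod_mem_genSR_of_mem_sigmaFin hA hB

/-- `𝔖^σ ⊗ 𝔗^σ` is generated by rectangles of sets of finite
measure. -/
theorem stmt_6 {α β : Type*} (S : Set (Set α)) (T : Set (Set β))
    (μ : Set α → ℝ≥0∞) (ν : Set β → ℝ≥0∞)
    (hS : IsSigmaRing S) (hT : IsSigmaRing T)
    (hμ : IsMeasure S μ) (hν : IsMeasure T ν) :
    prodSR (sigmaFin S μ) (sigmaFin T ν) =
      genSR {R | ∃ A ∈ S, ∃ B ∈ T, μ A < ⊤ ∧ ν B < ⊤ ∧ R = A ×ˢ B} :=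
  stmt_6_general S T μ ν
end

section
/- For a measure μ on a σ-ring 𝔖, a measurable function f is μ-integrable if and only if it is integrable with respect to the σ-finite component μ^σ, and in that case ∫ f dμ = ∫ f dμ^σ. In particular, integrability and the value of the integral depend only on μ^σ. -/
open Set ENNReal

/-!
An integrable `f` has σ-finite support: by Chebyshev, each level set `{n⁻¹ ≤ |f|}` has
finite measure. Once the support lies in a σ-finite set `S`, every simple function below
`|f|`, `f⁺` or `f⁻` may be cut down to `S` without changing its integral, and the sets of
`𝔖` inside `S` are σ-finite, so the integrals over `𝔖` and over `𝔖^σ` agree; measurability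
transfers because `f` vanishes off `S`.
-/

open MeasureTheory

namespace IsSigmaRing

variable {α : Type*} {C : Set (Set α)}

theorem inter_mem (hC : IsSigmaRing C) {A B : Set α} (hA : A ∈ C) (hB : B ∈ C) :
    A ∩ B ∈ C := by
  rw [← Set.sdiff_sdiff_right_self]
  exact hC.2.1 _ _ hA (hC.2.1 _ _ hA hB)

theorem inter_mem_of_measurableSet (hC : IsSigmaRing C) {S E : Set α} (hS : S ∈ C)
    (hE : MeasurableSet[genSA C] E) : E ∩ S ∈ C := by
  induction E, hE using MeasurableSpace.generateFrom_induction with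
  | hC t ht _ => exact hC.inter_mem ht hS
  | empty => simpa using hC.1
  | compl t _ ht =>
    rw [← Set.sdiff_eq_compl_inter, ← Set.sdiff_inter_self_eq_sdiff]
    exact hC.2.1 _ _ hS ht
  | iUnion s _ hs => rw [Set.iUnion_inter]; exact hC.2.2 _ hs

end IsSigmaRing

theorem IsMeasure.mono {α : Type*} {C : Set (Set α)} {μ : Set α → ℝ≥0∞}
    (hC : IsSigmaRing C) (hμ : IsMeasure C μ) {A B : Set α} (hA : A ∈ C) (hB : B ∈ C)
    (hAB : A ⊆ B) : μ A ≤ μ B := by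
  let s : ℕ → Set α := fun n => if n = 0 then A else if n = 1 then B \ A else ∅
  have hs : ∀ n, s n ∈ C := by
    intro n
    by_cases h0 : n = 0 <;> by_cases h1 : n = 1 <;>
      simp [s, h0, h1, hA, hC.1, hC.2.1 _ _ hB hA]
  have hdisj : Pairwise (Function.onFun Disjoint s) := by
    rintro (_ | _ | i) (_ | _ | j) hij <;>
      simp_all [s, Function.onFun, Set.disjoint_sdiff_left, Set.disjoint_sdiff_right]
  have hunion : ⋃ n, s n = B := by
    ext x
    simp only [Set.mem_iUnion, s]
    constructor
    · rintro ⟨(_ | _ | n), hx⟩ <;> simp_all [Set.subset_def]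
    · intro hx
      by_cases hxA : x ∈ A
      exacts [⟨0, by simpa⟩, ⟨1, by simp [hx, hxA]⟩]
  calc μ A = μ (s 0) := by simp [s]
    _ ≤ ∑' n, μ (s n) := ENNReal.le_tsum 0
    _ = μ B := by rw [← hμ.2 s hs hdisj, hunion]

section SigmaFinite

variable {α : Type*} {C : Set (Set α)} {μ : Set α → ℝ≥0∞}

theorem sigmaFin_subset (hC : IsSigmaRing C) : sigmaFin C μ ⊆ C := by
  rintro A ⟨g, hg, rfl⟩
  exact hC.2.2 g fun n => (hg n).1

theorem mem_sigmaFin_of_subset (hC : IsSigmaRing C) (hμ : IsMeasure C μ) {A S : Set α}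
    (hA : A ∈ C) (hS : S ∈ sigmaFin C μ) (hAS : A ⊆ S) : A ∈ sigmaFin C μ := by
  obtain ⟨g, hg, rfl⟩ := hS
  refine ⟨fun n => A ∩ g n, fun n => ⟨hC.inter_mem hA (hg n).1, ?_⟩, ?_⟩
  · exact (hμ.mono hC (hC.inter_mem hA (hg n).1) (hg n).1 Set.inter_subset_right).trans_lt
      (hg n).2
  · rw [← Set.inter_iUnion, Set.inter_eq_left.mpr hAS]

theorem measurable_genSA_sigmaFin_iff {β : Type*} [Zero β] [MeasurableSpace β]
    (hC : IsSigmaRing C) (hμ : IsMeasure C μ) {f : α → β}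
    (hS : Function.support f ∈ sigmaFin C μ) :
    Measurable[genSA (sigmaFin C μ)] f ↔ Measurable[genSA C] f := by
  refine ⟨fun hf => hf.mono (MeasurableSpace.generateFrom_mono (sigmaFin_subset hC)) le_rfl,
    fun hf E hE => ?_⟩
  set S := Function.support f
  have hES : MeasurableSet[genSA (sigmaFin C μ)] (f ⁻¹' E ∩ S) :=
    MeasurableSpace.measurableSet_generateFrom <| mem_sigmaFin_of_subset hC hμ
      (hC.inter_mem_of_measurableSet (sigmaFin_subset hC hS) (hf hE)) hS
      Set.inter_subset_right
  have hSm : MeasurableSet[genSA (sigmaFin C μ)] S :=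
    MeasurableSpace.measurableSet_generateFrom hS
  -- off `S` the function is `0`, so `f ⁻¹' E \ S` is `Sᶜ` or `∅`
  by_cases h0 : (0 : β) ∈ E
  · convert hES.union hSm.compl using 1
    ext x
    by_cases hx : f x = 0 <;> simp [S, hx, h0]
  · convert hES using 1
    ext x
    by_cases hx : f x = 0 <;> simp [S, hx, h0]

end SigmaFinite

section LowerIntegral

variable {α : Type*} {C D : Set (Set α)} {μ : Set α → ℝ≥0∞}

theorem lintSR_mono_family (hDC : D ⊆ C) (g : α → ℝ≥0∞) : lintSR D μ g ≤ lintSR C μ g :=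
  iSup_le fun n => iSup_le fun c => iSup_le fun A => iSup_le fun hA => iSup_le fun hle =>
    le_iSup_of_le n <| le_iSup_of_le c <| le_iSup_of_le A <|
      le_iSup_of_le (fun i => hDC (hA i)) <| le_iSup_of_le hle le_rfl

theorem const_mul_le_lintSR {g : α → ℝ≥0∞} {c : ℝ≥0∞} {A : Set α} (hA : A ∈ C)
    (hcg : ∀ x ∈ A, c ≤ g x) : c * μ A ≤ lintSR C μ g := by
  have hle : ∀ x, ∑ i : Fin 1, (![A] i).indicator (fun _ => ![c] i) x ≤ g x := by
    intro x
    by_cases hx : x ∈ A <;> simp [hx, hcg]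
  calc c * μ A = ∑ i : Fin 1, ![c] i * μ (![A] i) := by simp
    _ ≤ lintSR C μ g :=
      le_iSup_of_le 1 <| le_iSup_of_le ![c] <| le_iSup_of_le ![A] <|
        le_iSup_of_le (fun _ => by simpa using hA) <| le_iSup_of_le hle le_rfl

theorem lintSR_sigmaFin_eq (hC : IsSigmaRing C) (hμ : IsMeasure C μ) {g : α → ℝ≥0∞}
    {S : Set α} (hS : S ∈ sigmaFin C μ) (hgS : Function.support g ⊆ S) :
    lintSR (sigmaFin C μ) μ g = lintSR C μ g := by
  refine le_antisymm (lintSR_mono_family (sigmaFin_subset hC) g) ?_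
  refine iSup_le fun n => iSup_le fun c => iSup_le fun A => iSup_le fun hA =>
    iSup_le fun hle => ?_
  have hAS : ∀ i, c i ≠ 0 → A i ⊆ S := fun i hci x hx => hgS <| ne_of_gt <|
    calc 0 < c i := pos_iff_ne_zero.mpr hci
      _ = (A i).indicator (fun _ => c i) x := (Set.indicator_of_mem hx fun _ => c i).symm
      _ ≤ ∑ j, (A j).indicator (fun _ => c j) x :=
        Finset.single_le_sum (f := fun j => (A j).indicator (fun _ => c j) x)
          (fun _ _ => zero_le) (Finset.mem_univ i)
      _ ≤ g x := hle x
  have hmem : ∀ i, A i ∩ S ∈ sigmaFin C μ := fun i =>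
    mem_sigmaFin_of_subset hC hμ (hC.inter_mem (hA i) (sigmaFin_subset hC hS)) hS
      Set.inter_subset_right
  have hle' : ∀ x, ∑ i, (A i ∩ S).indicator (fun _ => c i) x ≤ g x := fun x =>
    (Finset.sum_le_sum fun i _ =>
      Set.indicator_le_indicator_of_subset Set.inter_subset_left (fun _ => zero_le) x).trans
      (hle x)
  have hsum : ∑ i, c i * μ (A i ∩ S) = ∑ i, c i * μ (A i) := by
    refine Finset.sum_congr rfl fun i _ => ?_
    by_cases hci : c i = 0
    · simp [hci]
    · rw [Set.inter_eq_left.mpr (hAS i hci)]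
  rw [← hsum]
  exact le_iSup_of_le n <| le_iSup_of_le c <| le_iSup_of_le (fun i => A i ∩ S) <|
    le_iSup_of_le hmem <| le_iSup_of_le hle' le_rfl

end LowerIntegral

theorem support_mem_sigmaFin_of_lintSR_lt_top {α : Type*} {C : Set (Set α)}
    {μ : Set α → ℝ≥0∞} (hC : IsSigmaRing C) {g : α → ℝ≥0∞} (hg : Measurable[genSA C] g)
    (hgC : Function.support g ∈ C) (hfin : lintSR C μ g < ⊤) :
    Function.support g ∈ sigmaFin C μ := by
  let L : ℕ → Set α := fun n => g ⁻¹' Set.Ici (n : ℝ≥0∞)⁻¹ ∩ Function.support g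
  have hLC : ∀ n, L n ∈ C := fun n =>
    hC.inter_mem_of_measurableSet hgC (hg measurableSet_Ici)
  have hLfin : ∀ n, μ (L n) < ⊤ := fun n =>
    ENNReal.lt_top_of_mul_ne_top_right
      ((const_mul_le_lintSR (hLC n) fun _ hx => hx.1).trans_lt hfin).ne
      (ENNReal.inv_ne_zero.mpr (ENNReal.natCast_ne_top n))
  refine ⟨L, fun n => ⟨hLC n, hLfin n⟩, ?_⟩
  ext x
  simp only [Set.mem_iUnion, L, Set.mem_inter_iff, Set.mem_preimage, Set.mem_Ici]
  refine ⟨fun hx => ?_, fun ⟨_, _, hx⟩ => hx⟩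
  obtain ⟨n, hn⟩ := ENNReal.exists_inv_nat_lt hx
  exact ⟨n, hn.le, hx⟩

theorem EReal.abs_eq_toENNReal_add_toENNReal_neg (x : EReal) :
    x.abs = x.toENNReal + (-x).toENNReal := by
  induction x using EReal.rec with
  | bot => simp
  | top => simp
  | coe r =>
    rcases le_total 0 r with hr | hr
    · simp [EReal.abs_def, abs_of_nonneg hr, ENNReal.ofReal_of_nonpos (neg_nonpos.mpr hr)]
    · simp [EReal.abs_def, abs_of_nonpos hr, ENNReal.ofReal_of_nonpos hr]

theorem EReal.measurable_abs : Measurable EReal.abs := by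
  rw [funext EReal.abs_eq_toENNReal_add_toENNReal_neg]
  exact EReal.continuous_toENNReal.measurable.add
    (EReal.continuous_toENNReal.measurable.comp measurable_neg)

section IntegralE

variable {α : Type*} {C : Set (Set α)} {μ : Set α → ℝ≥0∞} {f : α → EReal}

theorem epos_zero : epos 0 = 0 := by
  simp [epos]

theorem support_ereal_abs (f : α → EReal) :
    Function.support (fun x => (f x).abs) = Function.support f :=
  Function.support_comp_eq _ EReal.abs_eq_zero_iff f

theorem IntegrableE.support_mem_sigmaFin (hC : IsSigmaRing C) (hf : IntegrableE C μ f) :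
    Function.support f ∈ sigmaFin C μ := by
  obtain ⟨⟨hm, hS⟩, hfin⟩ := hf
  rw [← support_ereal_abs]
  exact support_mem_sigmaFin_of_lintSR_lt_top hC (EReal.measurable_abs.comp hm)
    ((support_ereal_abs f).symm ▸ hS) hfin

theorem integrableE_sigmaFin_iff (hC : IsSigmaRing C) (hμ : IsMeasure C μ)
    (hS : Function.support f ∈ sigmaFin C μ) :
    IntegrableE (sigmaFin C μ) μ f ↔ IntegrableE C μ f := by
  unfold IntegrableE SRMeasurableE
  rw [measurable_genSA_sigmaFin_iff hC hμ hS,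
    lintSR_sigmaFin_eq hC hμ hS (support_ereal_abs f).subset]
  exact and_congr_left' (and_congr_right' (iff_of_true hS (sigmaFin_subset hC hS)))

theorem integralE_sigmaFin_eq (hC : IsSigmaRing C) (hμ : IsMeasure C μ)
    (hS : Function.support f ∈ sigmaFin C μ) :
    integralE (sigmaFin C μ) μ f = integralE C μ f := by
  unfold integralE
  rw [lintSR_sigmaFin_eq (g := fun x => epos (f x)) hC hμ hS
      (Function.support_comp_subset epos_zero f),
    lintSR_sigmaFin_eq (g := fun x => epos (-f x)) hC hμ hS
      ((Function.support_comp_subset epos_zero (-f)).trans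
        (Function.support_comp_eq Neg.neg EReal.neg_eq_zero_iff f).subset)]

end IntegralE

theorem stmt_14_general {α : Type*} (C : Set (Set α)) (μ : Set α → ℝ≥0∞)
    (hC : IsSigmaRing C) (hμ : IsMeasure C μ)
    (f : α → EReal) :
    (IntegrableE C μ f ↔ IntegrableE (sigmaFin C μ) μ f) ∧
      (IntegrableE C μ f → integralE C μ f = integralE (sigmaFin C μ) μ f) :=
  ⟨⟨fun hf => (integrableE_sigmaFin_iff hC hμ (hf.support_mem_sigmaFin hC)).mpr hf,
      fun hf => (integrableE_sigmaFin_iff hC hμ hf.1.2).mp hf⟩,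
    fun hf => (integralE_sigmaFin_eq hC hμ (hf.support_mem_sigmaFin hC)).symm⟩

/-- integrability and the value of the integral depend only on
the σ-finite component of the measure. -/
theorem stmt_14 {α : Type*} (C : Set (Set α)) (μ : Set α → ℝ≥0∞)
    (hC : IsSigmaRing C) (hμ : IsMeasure C μ)
    (f : α → EReal) (hf : SRMeasurableE C f) :
    (IntegrableE C μ f ↔ IntegrableE (sigmaFin C μ) μ f) ∧
      (IntegrableE C μ f → integralE C μ f = integralE (sigmaFin C μ) μ f) :=
  stmt_14_general C μ hC hμ f
end
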